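/- arXiv:2305.11148 — 2 statements merged into one kernel-verified Lean document; each statement's English description precedes it below -/
import Mathlib

section
/- Let D ⊂ ℝ² be a bounded smooth domain and let v be a radial function (v(x) = v̄(|x|)) belonging to H¹₀(B) ∩ L²(B, dx/|x|²) on the unit disk B. Then for every divergence-free vector field φ ∈ C_c^∞(B∖{0}; ℝ²), the nonlinear term vanishes: ∫_B |v̄(|x|)|² (x^⊥/|x|²) · ((x^⊥·∇)φ)(x) dx = 0. In particular, circularly symmetric vector fields u(x) = v̄(|x|) x^⊥/|x| satisfy b(u, φ, u) = 0 for the Navier–Stokes trilinear form b. -/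
open MeasureTheory

/-- Euclidean dot product on `ℝ × ℝ`. -/
def dot2 (a b : ℝ × ℝ) : ℝ := a.1 * b.1 + a.2 * b.2

/-- Rotation by `π/2`: `x^⊥ = (−x₂, x₁)`. -/
def perp2 (a : ℝ × ℝ) : ℝ × ℝ := (-a.2, a.1)

/-- Euclidean norm on `ℝ × ℝ`. -/
noncomputable def enorm2 (x : ℝ × ℝ) : ℝ := Real.sqrt (x.1 ^ 2 + x.2 ^ 2)

/-- The open unit disk `B ⊂ ℝ²`. -/
def unitDisk : Set (ℝ × ℝ) := {x | x.1 ^ 2 + x.2 ^ 2 < 1}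

private lemma aux_sq_pos {x : ℝ × ℝ} (hx : x ≠ 0) : 0 < x.1 ^ 2 + x.2 ^ 2 := by
  by_contra h
  push_neg at h
  have h1 : x.1 = 0 := by nlinarith [sq_nonneg x.1, sq_nonneg x.2]
  have h2 : x.2 = 0 := by nlinarith [sq_nonneg x.1, sq_nonneg x.2]
  exact hx (by ext <;> simp [h1, h2])

private lemma aux_apply_eval (L : ℝ × ℝ →L[ℝ] ℝ) (v : ℝ × ℝ) :
    L v = v.1 * L (1, 0) + v.2 * L (0, 1) := by
  have hv : v = v.1 • ((1:ℝ), (0:ℝ)) + v.2 • ((0:ℝ), (1:ℝ)) := by ext <;> simp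
  have h : L v = L (v.1 • ((1:ℝ), (0:ℝ))) + L (v.2 • ((0:ℝ), (1:ℝ))) := by
    rw [← map_add]; exact congrArg L hv
  rw [h, L.map_smul, L.map_smul]; simp [smul_eq_mul]

private lemma aux_d_contDiff (f : ℝ × ℝ → ℝ) (hf : ContDiff ℝ (⊤ : ℕ∞) f) (v : ℝ × ℝ) :
    ContDiff ℝ (⊤ : ℕ∞) (fun y => fderiv ℝ f y v) :=
  (hf.fderiv_right (by simp)).clm_apply contDiff_const

private lemma aux_schwarz (f : ℝ × ℝ → ℝ) (hf : ContDiff ℝ (⊤ : ℕ∞) f) (x v w : ℝ × ℝ) :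
    fderiv ℝ (fun y => fderiv ℝ f y v) x w = fderiv ℝ (fun y => fderiv ℝ f y w) x v := by
  have hd : ∀ y, HasFDerivAt f (fderiv ℝ f y) y := fun y =>
    (hf.differentiable (by simp) y).hasFDerivAt
  have hd2 : HasFDerivAt (fderiv ℝ f) (fderiv ℝ (fderiv ℝ f) x) x :=
    ((hf.fderiv_right (m := (⊤ : ℕ∞)) (by simp)).differentiable (by simp) x).hasFDerivAt
  have hsym := second_derivative_symmetric hd hd2 w v
  have e1 := (hd2.clm_apply (hasFDerivAt_const v x)).fderiv
  have e2 := (hd2.clm_apply (hasFDerivAt_const w x)).fderiv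
  rw [e1, e2]
  simpa using hsym

noncomputable def auxh (vbar : ℝ → ℝ) (ρ : ℝ) : ℝ := ∫ t in (1:ℝ)..ρ, vbar t ^ 2 / t

noncomputable def auxA (φ : ℝ × ℝ → ℝ × ℝ) (y : ℝ × ℝ) : ℝ :=
  -y.2 * fderiv ℝ (fun z => (φ z).1) y (0, 1) + y.1 * fderiv ℝ (fun z => (φ z).2) y (0, 1)

noncomputable def auxB (φ : ℝ × ℝ → ℝ × ℝ) (y : ℝ × ℝ) : ℝ :=
  y.2 * fderiv ℝ (fun z => (φ z).1) y (1, 0) - y.1 * fderiv ℝ (fun z => (φ z).2) y (1, 0)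

noncomputable def auxU₁ (vbar : ℝ → ℝ) (φ : ℝ × ℝ → ℝ × ℝ) (y : ℝ × ℝ) : ℝ :=
  auxh vbar (enorm2 y) * auxA φ y

noncomputable def auxU₂ (vbar : ℝ → ℝ) (φ : ℝ × ℝ → ℝ × ℝ) (y : ℝ × ℝ) : ℝ :=
  auxh vbar (enorm2 y) * auxB φ y

private lemma aux_key (vbar : ℝ → ℝ) (hv : Continuous vbar)
    (φ : ℝ × ℝ → ℝ × ℝ) (hφ : ContDiff ℝ (⊤ : ℕ∞) φ)
    (hφdiv : ∀ x : ℝ × ℝ,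
      fderiv ℝ (fun y => (φ y).1) x (1, 0) + fderiv ℝ (fun y => (φ y).2) x (0, 1) = 0)
    (x : ℝ × ℝ) (hx : x ≠ 0) :
    ∃ L₁ L₂ : ℝ × ℝ →L[ℝ] ℝ, HasFDerivAt (auxU₁ vbar φ) L₁ x ∧ HasFDerivAt (auxU₂ vbar φ) L₂ x ∧
      L₁ (1, 0) + L₂ (0, 1)
        = vbar (enorm2 x) ^ 2 / enorm2 x ^ 2 * dot2 (perp2 x) (fderiv ℝ φ x (perp2 x)) := by
  have hq0 : 0 < x.1 ^ 2 + x.2 ^ 2 := aux_sq_pos hx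
  have hρ : 0 < enorm2 x := Real.sqrt_pos.2 hq0
  have hq : HasFDerivAt (fun y : ℝ × ℝ => y.1 ^ 2 + y.2 ^ 2)
      ((x.1 • ContinuousLinearMap.fst ℝ ℝ ℝ + x.1 • ContinuousLinearMap.fst ℝ ℝ ℝ) +
        (x.2 • ContinuousLinearMap.snd ℝ ℝ ℝ + x.2 • ContinuousLinearMap.snd ℝ ℝ ℝ)) x := by
    have h := ((hasFDerivAt_fst (𝕜 := ℝ) (p := x)).mul (hasFDerivAt_fst (𝕜 := ℝ) (p := x))).add
      ((hasFDerivAt_snd (𝕜 := ℝ) (p := x)).mul (hasFDerivAt_snd (𝕜 := ℝ) (p := x)))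
    exact h.congr_of_eventuallyEq (Filter.Eventually.of_forall fun y => by simp [pow_two])
  have hsq : HasDerivAt Real.sqrt (1 / (2 * Real.sqrt (x.1 ^ 2 + x.2 ^ 2))) (x.1 ^ 2 + x.2 ^ 2) :=
    Real.hasDerivAt_sqrt hq0.ne'
  have henorm : HasFDerivAt enorm2
      ((1 / (2 * Real.sqrt (x.1 ^ 2 + x.2 ^ 2))) •
        ((x.1 • ContinuousLinearMap.fst ℝ ℝ ℝ + x.1 • ContinuousLinearMap.fst ℝ ℝ ℝ) +
          (x.2 • ContinuousLinearMap.snd ℝ ℝ ℝ + x.2 • ContinuousLinearMap.snd ℝ ℝ ℝ))) x :=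
    hsq.comp_hasFDerivAt x hq
  have hcont : ∀ t : ℝ, t ≠ 0 → ContinuousAt (fun s => vbar s ^ 2 / s) t := fun t ht =>
    ((hv.pow 2).continuousAt).div continuousAt_id ht
  have hh : HasDerivAt (auxh vbar) (vbar (enorm2 x) ^ 2 / enorm2 x) (enorm2 x) := by
    apply intervalIntegral.integral_hasDerivAt_right
    · apply ContinuousOn.intervalIntegrable
      intro t ht
      have ht0 : t ≠ 0 := by
        rcases ht with ⟨h1, h2⟩
        have : 0 < min 1 (enorm2 x) := lt_min one_pos hρ
        exact (lt_of_lt_of_le this h1).ne'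
      exact (hcont t ht0).continuousWithinAt
    · exact ContinuousAt.stronglyMeasurableAtFilter isOpen_compl_singleton
        (fun t ht => hcont t ht) _ hρ.ne'
    · exact hcont _ hρ.ne'
  have hψ : HasFDerivAt (fun y => auxh vbar (enorm2 y))
      ((vbar (enorm2 x) ^ 2 / enorm2 x) •
        ((1 / (2 * Real.sqrt (x.1 ^ 2 + x.2 ^ 2))) •
          ((x.1 • ContinuousLinearMap.fst ℝ ℝ ℝ + x.1 • ContinuousLinearMap.fst ℝ ℝ ℝ) +
            (x.2 • ContinuousLinearMap.snd ℝ ℝ ℝ + x.2 • ContinuousLinearMap.snd ℝ ℝ ℝ)))) x :=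
    hh.comp_hasFDerivAt x henorm
  set φ₁ : ℝ × ℝ → ℝ := fun z => (φ z).1 with hφ₁def
  set φ₂ : ℝ × ℝ → ℝ := fun z => (φ z).2 with hφ₂def
  have hφ₁ : ContDiff ℝ (⊤ : ℕ∞) φ₁ := contDiff_fst.comp hφ
  have hφ₂ : ContDiff ℝ (⊤ : ℕ∞) φ₂ := contDiff_snd.comp hφ
  have hd21 : HasFDerivAt (fun y => fderiv ℝ φ₁ y (0, 1))
      (fderiv ℝ (fun y => fderiv ℝ φ₁ y (0, 1)) x) x :=
    ((aux_d_contDiff φ₁ hφ₁ _).differentiable (by simp) x).hasFDerivAt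
  have hd22 : HasFDerivAt (fun y => fderiv ℝ φ₂ y (0, 1))
      (fderiv ℝ (fun y => fderiv ℝ φ₂ y (0, 1)) x) x :=
    ((aux_d_contDiff φ₂ hφ₂ _).differentiable (by simp) x).hasFDerivAt
  have hd11 : HasFDerivAt (fun y => fderiv ℝ φ₁ y (1, 0))
      (fderiv ℝ (fun y => fderiv ℝ φ₁ y (1, 0)) x) x :=
    ((aux_d_contDiff φ₁ hφ₁ _).differentiable (by simp) x).hasFDerivAt
  have hd12 : HasFDerivAt (fun y => fderiv ℝ φ₂ y (1, 0))
      (fderiv ℝ (fun y => fderiv ℝ φ₂ y (1, 0)) x) x :=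
    ((aux_d_contDiff φ₂ hφ₂ _).differentiable (by simp) x).hasFDerivAt
  have hA : HasFDerivAt (auxA φ) _ x :=
    (((hasFDerivAt_snd (𝕜 := ℝ) (p := x)).neg.mul hd21).add
      ((hasFDerivAt_fst (𝕜 := ℝ) (p := x)).mul hd22))
  have hB : HasFDerivAt (auxB φ) _ x :=
    (((hasFDerivAt_snd (𝕜 := ℝ) (p := x)).mul hd11).sub
      ((hasFDerivAt_fst (𝕜 := ℝ) (p := x)).mul hd12))
  have hU₁ : HasFDerivAt (auxU₁ vbar φ) _ x := hψ.mul hA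
  have hU₂ : HasFDerivAt (auxU₂ vbar φ) _ x := hψ.mul hB
  refine ⟨_, _, hU₁, hU₂, ?_⟩
  have hfst : ∀ v : ℝ × ℝ, fderiv ℝ φ₁ x v = (fderiv ℝ φ x v).1 := by
    intro v
    have h := ((ContinuousLinearMap.fst ℝ ℝ ℝ).hasFDerivAt (x := φ x)).comp x
      (hφ.differentiable (by simp) x).hasFDerivAt
    have : fderiv ℝ φ₁ x = (ContinuousLinearMap.fst ℝ ℝ ℝ).comp (fderiv ℝ φ x) := h.fderiv
    rw [this]; rfl
  have hsnd : ∀ v : ℝ × ℝ, fderiv ℝ φ₂ x v = (fderiv ℝ φ x v).2 := by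
    intro v
    have h := ((ContinuousLinearMap.snd ℝ ℝ ℝ).hasFDerivAt (x := φ x)).comp x
      (hφ.differentiable (by simp) x).hasFDerivAt
    have : fderiv ℝ φ₂ x = (ContinuousLinearMap.snd ℝ ℝ ℝ).comp (fderiv ℝ φ x) := h.fderiv
    rw [this]; rfl
  have hsqrt : Real.sqrt (x.1 ^ 2 + x.2 ^ 2) = enorm2 x := rfl
  simp only [ContinuousLinearMap.add_apply, ContinuousLinearMap.smul_apply,
    ContinuousLinearMap.coe_fst', ContinuousLinearMap.coe_snd', ContinuousLinearMap.neg_apply,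
    ContinuousLinearMap.sub_apply, smul_eq_mul, ContinuousLinearMap.smulRight_apply,
    ContinuousLinearMap.coe_comp', Function.comp_apply, hsqrt]
  have hs1 := aux_schwarz φ₁ hφ₁ x (0, 1) (1, 0)
  have hs2 := aux_schwarz φ₂ hφ₂ x (0, 1) (1, 0)
  have ha22 : fderiv ℝ φ₂ x (0, 1) = -fderiv ℝ φ₁ x (1, 0) := by linarith [hφdiv x]
  have hR1 : ((fderiv ℝ φ x) (perp2 x)).1 = fderiv ℝ φ₁ x (perp2 x) := (hfst _).symm
  have hR2 : ((fderiv ℝ φ x) (perp2 x)).2 = fderiv ℝ φ₂ x (perp2 x) := (hsnd _).symm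
  have e1 := aux_apply_eval (fderiv ℝ φ₁ x) (perp2 x)
  have e2 := aux_apply_eval (fderiv ℝ φ₂ x) (perp2 x)
  simp only [perp2] at e1 e2 hR1 hR2
  simp only [dot2, perp2, hR1, hR2, e1, e2, auxA, auxB, hs1, hs2, ← hφ₁def, ← hφ₂def, Pi.neg_apply, ha22]
  field_simp
  ring

/-- For a radial function `v̄` (with `v(x) = v̄(|x|)` in `H¹₀ ∩ L²(dx/|x|²)`,
here encoded by continuity and the weighted integrability) and any divergence-free
`φ ∈ C_c^∞(B∖{0}; ℝ²)`, the nonlinear term vanishes: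
`∫_B |v̄(|x|)|² (x^⊥/|x|²) · ((x^⊥·∇)φ)(x) dx = 0`; equivalently the circularly symmetric
field `u = v̄(|x|) x^⊥/|x|` satisfies `b(u, φ, u) = 0`. -/
theorem stmt4 (vbar : ℝ → ℝ) (hv : Continuous vbar)
    (hint : IntegrableOn (fun x : ℝ × ℝ => (vbar (enorm2 x)) ^ 2 / (enorm2 x) ^ 2) unitDisk)
    (φ : ℝ × ℝ → ℝ × ℝ) (hφ : ContDiff ℝ (⊤ : ℕ∞) φ) (hφc : HasCompactSupport φ)
    (hφsupp : tsupport φ ⊆ unitDisk \ {0})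
    (hφdiv : ∀ x : ℝ × ℝ,
      fderiv ℝ (fun y => (φ y).1) x (1, 0) + fderiv ℝ (fun y => (φ y).2) x (0, 1) = 0) :
    ∫ x in unitDisk,
      (vbar (enorm2 x)) ^ 2 / (enorm2 x) ^ 2 * dot2 (perp2 x) (fderiv ℝ φ x (perp2 x)) = 0 := by
  set F : ℝ × ℝ → ℝ := fun x =>
    vbar (enorm2 x) ^ 2 / enorm2 x ^ 2 * dot2 (perp2 x) (fderiv ℝ φ x (perp2 x)) with hFdef
  have hop : IsOpen (tsupport φ)ᶜ := (isClosed_tsupport φ).isOpen_compl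
  -- everything vanishes off the support
  have hzero : ∀ y, y ∉ tsupport φ → fderiv ℝ φ y = 0 ∧ auxU₁ vbar φ y = 0 ∧
      auxU₂ vbar φ y = 0 ∧ F y = 0 := by
    intro y hy
    have hev : φ =ᶠ[nhds y] 0 := notMem_tsupport_iff_eventuallyEq.mp hy
    have h1 : fderiv ℝ φ y = 0 := by
      rw [hev.fderiv_eq]; exact fderiv_const_apply 0
    have h2 : fderiv ℝ (fun z => (φ z).1) y = 0 := by
      have hev2 : (fun z => (φ z).1) =ᶠ[nhds y] (fun _ => (0:ℝ)) :=
        hev.mono (fun z hz => by simp [hz])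
      rw [hev2.fderiv_eq]; exact fderiv_const_apply 0
    have h3 : fderiv ℝ (fun z => (φ z).2) y = 0 := by
      have hev3 : (fun z => (φ z).2) =ᶠ[nhds y] (fun _ => (0:ℝ)) :=
        hev.mono (fun z hz => by simp [hz])
      rw [hev3.fderiv_eq]; exact fderiv_const_apply 0
    refine ⟨h1, ?_, ?_, ?_⟩
    · simp [auxU₁, auxA, h2, h3]
    · simp [auxU₂, auxB, h2, h3]
    · simp [hFdef, h1, dot2]
  have hsupp_ne : ∀ x : ℝ × ℝ, x ∈ tsupport φ → x ≠ 0 := by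
    intro x hx h0
    exact (hφsupp hx).2 (by simp [h0])
  -- global differentiability and the pointwise divergence identity
  have hUdiff : ∀ x : ℝ × ℝ, HasFDerivAt (auxU₁ vbar φ) (fderiv ℝ (auxU₁ vbar φ) x) x ∧
      HasFDerivAt (auxU₂ vbar φ) (fderiv ℝ (auxU₂ vbar φ) x) x ∧
      fderiv ℝ (auxU₁ vbar φ) x (1, 0) + fderiv ℝ (auxU₂ vbar φ) x (0, 1) = F x := by
    intro x
    by_cases hx : x ∈ tsupport φ
    · obtain ⟨L₁, L₂, h1, h2, h3⟩ := aux_key vbar hv φ hφ hφdiv x (hsupp_ne x hx)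
      exact ⟨by rw [h1.fderiv]; exact h1, by rw [h2.fderiv]; exact h2,
        by rw [h1.fderiv, h2.fderiv]; exact h3⟩
    · have hnb : (tsupport φ)ᶜ ∈ nhds x := hop.mem_nhds hx
      have hev1 : auxU₁ vbar φ =ᶠ[nhds x] (fun _ => (0:ℝ)) :=
        Filter.eventually_of_mem hnb (fun y hy => (hzero y hy).2.1)
      have hev2 : auxU₂ vbar φ =ᶠ[nhds x] (fun _ => (0:ℝ)) :=
        Filter.eventually_of_mem hnb (fun y hy => (hzero y hy).2.2.1)
      have hd1 : HasFDerivAt (auxU₁ vbar φ) 0 x :=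
        (hasFDerivAt_const (𝕜 := ℝ) (0:ℝ) x).congr_of_eventuallyEq hev1
      have hd2 : HasFDerivAt (auxU₂ vbar φ) 0 x :=
        (hasFDerivAt_const (𝕜 := ℝ) (0:ℝ) x).congr_of_eventuallyEq hev2
      refine ⟨by rw [hd1.fderiv]; exact hd1, by rw [hd2.fderiv]; exact hd2, ?_⟩
      rw [hd1.fderiv, hd2.fderiv, (hzero x hx).2.2.2]
      simp
  -- continuity of F
  have henorm2c : Continuous enorm2 := by
    unfold enorm2
    exact Real.continuous_sqrt.comp ((continuous_fst.pow 2).add (continuous_snd.pow 2))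
  have hFcont : Continuous F := by
    rw [continuous_iff_continuousAt]; intro x
    by_cases hx : x ∈ tsupport φ
    · have hx0 : x ≠ 0 := hsupp_ne x hx
      have hρ : 0 < enorm2 x := Real.sqrt_pos.2 (aux_sq_pos hx0)
      have h1 : ContinuousAt (fun y => vbar (enorm2 y) ^ 2 / enorm2 y ^ 2) x :=
        ContinuousAt.div (((hv.comp henorm2c).pow 2).continuousAt)
          ((henorm2c.pow 2).continuousAt) (pow_ne_zero _ hρ.ne')
      have hperp : Continuous (perp2 : ℝ × ℝ → ℝ × ℝ) := by
        unfold perp2; exact (continuous_snd.neg).prodMk continuous_fst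
      have hdφ : Continuous (fderiv ℝ φ) := hφ.continuous_fderiv (by simp)
      have happ : Continuous (fun y => fderiv ℝ φ y (perp2 y)) := hdφ.clm_apply hperp
      have h2 : Continuous (fun y => dot2 (perp2 y) (fderiv ℝ φ y (perp2 y))) := by
        simp only [dot2]
        exact ((hperp.fst.mul happ.fst)).add ((hperp.snd.mul happ.snd))
      exact h1.mul h2.continuousAt
    · have hnb : (tsupport φ)ᶜ ∈ nhds x := hop.mem_nhds hx
      have hev : F =ᶠ[nhds x] (fun _ => (0:ℝ)) :=
        Filter.eventually_of_mem hnb (fun y hy => (hzero y hy).2.2.2)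
      exact ContinuousAt.congr continuousAt_const hev.symm
  -- continuity of U₁, U₂
  have hUcont : Continuous (auxU₁ vbar φ) ∧ Continuous (auxU₂ vbar φ) := by
    constructor <;> rw [continuous_iff_continuousAt] <;> intro x <;> by_cases hx : x ∈ tsupport φ
    · obtain ⟨L₁, L₂, h1, _, _⟩ := aux_key vbar hv φ hφ hφdiv x (hsupp_ne x hx)
      exact h1.differentiableAt.continuousAt
    · have hnb : (tsupport φ)ᶜ ∈ nhds x := hop.mem_nhds hx
      have hev : auxU₁ vbar φ =ᶠ[nhds x] (fun _ => (0:ℝ)) :=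
        Filter.eventually_of_mem hnb (fun y hy => (hzero y hy).2.1)
      exact ContinuousAt.congr continuousAt_const hev.symm
    · obtain ⟨L₁, L₂, _, h2, _⟩ := aux_key vbar hv φ hφ hφdiv x (hsupp_ne x hx)
      exact h2.differentiableAt.continuousAt
    · have hnb : (tsupport φ)ᶜ ∈ nhds x := hop.mem_nhds hx
      have hev : auxU₂ vbar φ =ᶠ[nhds x] (fun _ => (0:ℝ)) :=
        Filter.eventually_of_mem hnb (fun y hy => (hzero y hy).2.2.1)
      exact ContinuousAt.congr continuousAt_const hev.symm
  -- the box
  have hab : ((-2:ℝ), (-2:ℝ)) ≤ ((2:ℝ), (2:ℝ)) := ⟨by norm_num, by norm_num⟩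
  have hdisk_sub : unitDisk ⊆ Set.Icc ((-2:ℝ), (-2:ℝ)) ((2:ℝ), (2:ℝ)) := by
    intro x hx
    have h : x.1 ^ 2 + x.2 ^ 2 < 1 := hx
    refine ⟨⟨show (-2:ℝ) ≤ x.1 from ?_, show (-2:ℝ) ≤ x.2 from ?_⟩,
      show x.1 ≤ (2:ℝ) from ?_, show x.2 ≤ (2:ℝ) from ?_⟩ <;>
      nlinarith [sq_nonneg x.1, sq_nonneg x.2]
  have hFeq : (fun x => fderiv ℝ (auxU₁ vbar φ) x (1, 0) + fderiv ℝ (auxU₂ vbar φ) x (0, 1)) = F :=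
    funext fun x => (hUdiff x).2.2
  have hdiv := integral_divergence_prod_Icc_of_hasFDerivAt_off_countable_of_le
    (auxU₁ vbar φ) (auxU₂ vbar φ)
    (fun x => fderiv ℝ (auxU₁ vbar φ) x) (fun x => fderiv ℝ (auxU₂ vbar φ) x)
    ((-2:ℝ), (-2:ℝ)) ((2:ℝ), (2:ℝ)) hab ∅ Set.countable_empty
    hUcont.1.continuousOn hUcont.2.continuousOn
    (fun x _ => (hUdiff x).1) (fun x _ => (hUdiff x).2.1)
    (by rw [hFeq]; exact hFcont.continuousOn.integrableOn_compact isCompact_Icc)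
  -- points outside the disk kill U
  have hUout : ∀ p : ℝ × ℝ, p ∉ unitDisk → auxU₁ vbar φ p = 0 ∧ auxU₂ vbar φ p = 0 := by
    intro p hp
    have hps : p ∉ tsupport φ := fun h => hp (hφsupp h).1
    exact ⟨(hzero p hps).2.1, (hzero p hps).2.2.1⟩
  have hout2 : ∀ t : ℝ, ∀ s : ℝ, s ^ 2 ≥ 4 → ((t, s) : ℝ × ℝ) ∉ unitDisk ∧
      ((s, t) : ℝ × ℝ) ∉ unitDisk := by
    intro t s hs
    constructor <;> intro h <;> simp only [unitDisk, Set.mem_setOf_eq] at h <;>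
      nlinarith [sq_nonneg t, sq_nonneg s]
  have hb1 : (∫ t in (-2:ℝ)..(2:ℝ), auxU₂ vbar φ (t, (2:ℝ))) = 0 := by
    have h : ∀ t : ℝ, auxU₂ vbar φ (t, (2:ℝ)) = 0 := fun t =>
      (hUout _ ((hout2 t 2 (by norm_num)).1)).2
    simp [h]
  have hb2 : (∫ t in (-2:ℝ)..(2:ℝ), auxU₂ vbar φ (t, (-2:ℝ))) = 0 := by
    have h : ∀ t : ℝ, auxU₂ vbar φ (t, (-2:ℝ)) = 0 := fun t =>
      (hUout _ ((hout2 t (-2) (by norm_num)).1)).2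
    simp [h]
  have hb3 : (∫ t in (-2:ℝ)..(2:ℝ), auxU₁ vbar φ ((2:ℝ), t)) = 0 := by
    have h : ∀ t : ℝ, auxU₁ vbar φ ((2:ℝ), t) = 0 := fun t =>
      (hUout _ ((hout2 t 2 (by norm_num)).2)).1
    simp [h]
  have hb4 : (∫ t in (-2:ℝ)..(2:ℝ), auxU₁ vbar φ ((-2:ℝ), t)) = 0 := by
    have h : ∀ t : ℝ, auxU₁ vbar φ ((-2:ℝ), t) = 0 := fun t =>
      (hUout _ ((hout2 t (-2) (by norm_num)).2)).1
    simp [h]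
  -- put everything together
  have hIcc : (∫ x in Set.Icc ((-2:ℝ), (-2:ℝ)) ((2:ℝ), (2:ℝ)), F x) = 0 := by
    rw [← hFeq]
    rw [hdiv]
    rw [hb1, hb2, hb3, hb4]
    ring
  calc ∫ x in unitDisk, F x = ∫ x, F x :=
        setIntegral_eq_integral_of_forall_compl_eq_zero (fun x hx =>
          (hzero x (fun h => hx (hφsupp h).1)).2.2.2)
    _ = ∫ x in Set.Icc ((-2:ℝ), (-2:ℝ)) ((2:ℝ), (2:ℝ)), F x :=
        (setIntegral_eq_integral_of_forall_compl_eq_zero (fun x hx =>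
          (hzero x (fun h => hx (hdisk_sub (hφsupp h).1))).2.2.2)).symm
    _ = 0 := hIcc
end

section
/- Let E₀, E be metric spaces, G : E₀ × L²([0,T]; H₀)_w → E a map (the weak topology on the second factor), continuous in the sense that x_n → x in E₀ and f_n ⇀ f in L²([0,T];H₀) imply G(x_n, f_n) → G(x, f) in E. Define I_x(v) = inf { (1/2)∫₀^T ‖f_s‖²_{H₀} ds : G(x, f) = v } (inf ∅ = ∞). Then for every v ∈ E, the map x ↦ I_x(v) is lower semicontinuous on E₀. -/
/-!
If `xₙ → x` and `I_{xₙ}(v) < c`, near-optimal controls `fₙ` with `G(xₙ, fₙ) = v` lie in the ball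
of radius `√(2c)`. A weakly convergent subsequence `f_{n_k} ⇀ f` satisfies `G(x, f) = v` by joint
continuity, and `‖f‖ ≤ √(2c)` by weak lower semicontinuity of the norm, so `I_x(v) ≤ c`.
Balls of any Hilbert space are weakly sequentially compact: the closed span of a sequence is
separable, so sequential Banach–Alaoglu and the Riesz representation apply there.
-/

open Filter MeasureTheory Topology
open scoped RealInnerProductSpace ENNReal

/-- The space `L²([0,T]; H₀)`. -/
noncomputable abbrev L2T (H₀ : Type*) [NormedAddCommGroup H₀] (T : ℝ) :=
  Lp H₀ 2 (volume.restrict (Set.Icc (0:ℝ) T))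

section WeakCompactness

variable {W : Type*} [NormedAddCommGroup W] [InnerProductSpace ℝ W]

theorem exists_subseq_tendsto_inner_of_separableSpace [CompleteSpace W]
    [TopologicalSpace.SeparableSpace W] {f : ℕ → W} {R : ℝ} (hR : ∀ n, ‖f n‖ ≤ R) :
    ∃ (g : W) (φ : ℕ → ℕ), StrictMono φ ∧
      ∀ y, Tendsto (fun k => ⟪f (φ k), y⟫) atTop (𝓝 ⟪g, y⟫) := by
  let u : ℕ → WeakDual ℝ W := fun n => StrongDual.toWeakDual (InnerProductSpace.toDual ℝ W (f n))
  have hu : ∀ n, u n ∈ WeakDual.toStrongDual ⁻¹' Metric.closedBall 0 R := by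
    simpa [u] using hR
  obtain ⟨ψ, -, φ, hφ, hlim⟩ := WeakDual.isSeqCompact_closedBall ℝ W 0 R hu
  refine ⟨(InnerProductSpace.toDual ℝ W).symm (WeakDual.toStrongDual ψ), φ, hφ, fun y => ?_⟩
  rw [← InnerProductSpace.toDual_apply_apply, LinearIsometryEquiv.apply_symm_apply]
  exact tendsto_iff_forall_eval_tendsto_topDualPairing.mp hlim y

theorem exists_subseq_tendsto_inner [CompleteSpace W] {f : ℕ → W} {R : ℝ}
    (hR : ∀ n, ‖f n‖ ≤ R) :
    ∃ (g : W) (φ : ℕ → ℕ), StrictMono φ ∧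
      ∀ y, Tendsto (fun k => ⟪f (φ k), y⟫) atTop (𝓝 ⟪g, y⟫) := by
  set K : Submodule ℝ W := (Submodule.span ℝ (Set.range f)).topologicalClosure
  have : TopologicalSpace.SeparableSpace K := by
    refine TopologicalSpace.IsSeparable.separableSpace ?_
    rw [Submodule.topologicalClosure_coe]
    exact (Set.countable_range f).isSeparable.span.closure
  have : CompleteSpace K := (Submodule.isClosed_topologicalClosure _).completeSpace_coe
  let fK : ℕ → K := fun n =>
    ⟨f n, Submodule.le_topologicalClosure _ (Submodule.subset_span ⟨n, rfl⟩)⟩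
  obtain ⟨g, φ, hφ, hlim⟩ := exists_subseq_tendsto_inner_of_separableSpace (f := fK) hR
  refine ⟨g, φ, hφ, fun y => ?_⟩
  simpa using hlim (K.orthogonalProjectionOnto y)

theorem norm_le_of_tendsto_inner {f : ℕ → W} {g : W} {R : ℝ} (hR : ∀ n, ‖f n‖ ≤ R)
    (hfg : ∀ y, Tendsto (fun n => ⟪f n, y⟫) atTop (𝓝 ⟪g, y⟫)) : ‖g‖ ≤ R := by
  have hsq : ‖g‖ ^ 2 ≤ R * ‖g‖ := by
    rw [← real_inner_self_eq_norm_sq]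
    exact le_of_tendsto' (hfg g) fun n =>
      (real_inner_le_norm _ _).trans (mul_le_mul_of_nonneg_right (hR n) (norm_nonneg g))
  nlinarith [norm_nonneg g, (norm_nonneg (f 0)).trans (hR 0)]

end WeakCompactness

section RateFunction

variable {X W E : Type*} [NormedAddCommGroup W]

/-- The paper's `I_x(v)`; an infimum over no controls is `⊤`. -/
noncomputable def rateFunction (G : X → W → E) (x : X) (v : E) : ℝ≥0∞ :=
  ⨅ (f : W) (_ : G x f = v), ENNReal.ofReal (‖f‖ ^ 2 / 2)

variable {G : X → W → E} {x : X} {v : E}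

theorem rateFunction_le {f : W} (hf : G x f = v) :
    rateFunction G x v ≤ ENNReal.ofReal (‖f‖ ^ 2 / 2) :=
  iInf₂_le f hf

theorem exists_of_rateFunction_lt {c : ℝ≥0∞} (h : rateFunction G x v < c) :
    ∃ f, G x f = v ∧ ENNReal.ofReal (‖f‖ ^ 2 / 2) < c := by
  obtain ⟨f, hf⟩ := iInf_lt_iff.mp h
  obtain ⟨hfv, hlt⟩ := iInf_lt_iff.mp hf
  exact ⟨f, hfv, hlt⟩

variable [InnerProductSpace ℝ W] [CompleteSpace W] [TopologicalSpace X] [TopologicalSpace E]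

theorem rateFunction_le_of_tendsto [T2Space E]
    (hG : ∀ (x : X) (xn : ℕ → X) (f : W) (fn : ℕ → W), Tendsto xn atTop (𝓝 x) →
      (∀ g, Tendsto (fun n => ⟪fn n, g⟫) atTop (𝓝 ⟪f, g⟫)) →
      Tendsto (fun n => G (xn n) (fn n)) atTop (𝓝 (G x f)))
    {xn : ℕ → X} {c : ℝ≥0∞} (hxn : Tendsto xn atTop (𝓝 x))
    (hc : ∀ n, rateFunction G (xn n) v < c) :
    rateFunction G x v ≤ c := by
  rcases eq_or_ne c ⊤ with rfl | hc_top
  · exact le_top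
  choose fn hGfn hfn using fun n => exists_of_rateFunction_lt (hc n)
  have energy_le_iff : ∀ {a : ℝ}, 0 ≤ a → (a ^ 2 / 2 ≤ c.toReal ↔ a ≤ √(2 * c.toReal)) := by
    intro a ha
    rw [Real.le_sqrt ha (by positivity)]
    constructor <;> intro h <;> linarith
  have hbound : ∀ n, ‖fn n‖ ≤ √(2 * c.toReal) := fun n =>
    (energy_le_iff (norm_nonneg _)).mp
      ((ENNReal.ofReal_lt_iff_lt_toReal (by positivity) hc_top).mp (hfn n)).le
  obtain ⟨g, φ, hφ, hweak⟩ := exists_subseq_tendsto_inner hbound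
  have hGg : G x g = v := by
    refine tendsto_nhds_unique (hG _ _ _ _ (hxn.comp hφ.tendsto_atTop) hweak) ?_
    simp only [Function.comp_apply, hGfn, tendsto_const_nhds]
  calc rateFunction G x v ≤ ENNReal.ofReal (‖g‖ ^ 2 / 2) := rateFunction_le hGg
    _ ≤ ENNReal.ofReal c.toReal := ENNReal.ofReal_le_ofReal <|
      (energy_le_iff (norm_nonneg _)).mpr (norm_le_of_tendsto_inner (fun k => hbound (φ k)) hweak)
    _ = c := ENNReal.ofReal_toReal hc_top

theorem lowerSemicontinuous_rateFunction [FirstCountableTopology X] [T2Space E]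
    (hG : ∀ (x : X) (xn : ℕ → X) (f : W) (fn : ℕ → W), Tendsto xn atTop (𝓝 x) →
      (∀ g, Tendsto (fun n => ⟪fn n, g⟫) atTop (𝓝 ⟪f, g⟫)) →
      Tendsto (fun n => G (xn n) (fn n)) atTop (𝓝 (G x f)))
    (v : E) :
    LowerSemicontinuous fun x => rateFunction G x v := by
  intro x c hc
  by_contra h
  obtain ⟨c', hcc', hc'x⟩ := exists_between hc
  obtain ⟨xn, hxn, hxnc⟩ := Filter.exists_seq_forall_of_frequently (not_eventually.mp h)
  exact (rateFunction_le_of_tendsto hG hxn fun n => (not_lt.mp (hxnc n)).trans_lt hcc').not_gt hc'x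

end RateFunction

theorem stmt14_general {E₀ E : Type*} [MetricSpace E₀] [MetricSpace E]
    {H₀ : Type*} [NormedAddCommGroup H₀] [InnerProductSpace ℝ H₀] [CompleteSpace H₀]
    (T : ℝ)
    (G : E₀ → L2T H₀ T → E)
    (hG : ∀ (x : E₀) (xn : ℕ → E₀) (f : L2T H₀ T) (fn : ℕ → L2T H₀ T),
      Tendsto xn atTop (nhds x) →
      (∀ g : L2T H₀ T, Tendsto (fun n => ⟪fn n, g⟫) atTop (nhds ⟪f, g⟫)) →
      Tendsto (fun n => G (xn n) (fn n)) atTop (nhds (G x f))) :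
    ∀ v : E, LowerSemicontinuous (fun x : E₀ =>
      ⨅ (f : L2T H₀ T) (_ : G x f = v), ENNReal.ofReal (‖f‖ ^ 2 / 2)) :=
  lowerSemicontinuous_rateFunction hG

/-- if `G : E₀ × L²([0,T];H₀)_w → E` is jointly sequentially continuous
(strong convergence in `E₀`, weak convergence in `L²`), then for each `v ∈ E` the rate
function `I_x(v) = inf { ½‖f‖²_{L²} : G(x,f) = v }` (`inf ∅ = ∞`) is lower semicontinuous
in `x`. -/
theorem stmt14 {E₀ E : Type*} [MetricSpace E₀] [MetricSpace E]
    {H₀ : Type*} [NormedAddCommGroup H₀] [InnerProductSpace ℝ H₀] [CompleteSpace H₀]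
    (T : ℝ) (hT : 0 < T)
    (G : E₀ → L2T H₀ T → E)
    (hG : ∀ (x : E₀) (xn : ℕ → E₀) (f : L2T H₀ T) (fn : ℕ → L2T H₀ T),
      Tendsto xn atTop (nhds x) →
      (∀ g : L2T H₀ T, Tendsto (fun n => ⟪fn n, g⟫) atTop (nhds ⟪f, g⟫)) →
      Tendsto (fun n => G (xn n) (fn n)) atTop (nhds (G x f))) :
    ∀ v : E, LowerSemicontinuous (fun x : E₀ =>
      ⨅ (f : L2T H₀ T) (_ : G x f = v), ENNReal.ofReal (‖f‖ ^ 2 / 2)) :=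
  stmt14_general T G hG
end
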